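/- arXiv:2402.10029 — 2 statements merged into one kernel-verified Lean document; each statement's English description precedes it below -/
import Mathlib

section
/- Let Λ be a level-sentence set for a language L. If A is a set of L-sentences, φ an L-sentence with A ⊬ φ ↔ ψ for every ψ ∈ ¬Λ, and T⁺ is any complete consistent theory extending A ∪ {φ} ∪ Th_Λ(A ∪ {¬φ}), then the theory (¬Λ ∩ T⁺) ∪ A ∪ {¬φ} is consistent. -/
open FirstOrder FirstOrder.Language

/-- `QHier b k φ`: `φ` is a `∃ₖ`-formula (if `b = true`) or a `∀ₖ`-formula (if `b = false`),
i.e. a prenex formula with at most `k` alternating quantifier blocks, beginning with `∃`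
(resp. `∀`). -/
inductive QHier {L : FirstOrder.Language} {α : Type} : Bool → ℕ → {n : ℕ} → L.BoundedFormula α n → Prop
  | qf {b k n} {φ : L.BoundedFormula α n} : φ.IsQF → QHier b k φ
  | ex {k n} {φ : L.BoundedFormula α (n + 1)} : QHier true (k + 1) φ → QHier true (k + 1) φ.ex
  | all {k n} {φ : L.BoundedFormula α (n + 1)} : QHier false (k + 1) φ → QHier false (k + 1) φ.all
  | dual {b k n} {φ : L.BoundedFormula α n} : QHier (!b) k φ → QHier b (k + 1) φ

/-- The set of `∃ₖ`-sentences of `L`. -/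
def ExSet (L : FirstOrder.Language) (k : ℕ) : Set L.Sentence := {φ | QHier true k φ}
/-- The set of `∀ₖ`-sentences of `L`. -/
def AllSet (L : FirstOrder.Language) (k : ℕ) : Set L.Sentence := {φ | QHier false k φ}

/-- A level-sentence set: the set of `∃ₖ` or of `∀ₖ`-sentences for some `k`. -/
def IsLevelSet {L : FirstOrder.Language} (Λ : Set L.Sentence) : Prop :=
  ∃ k, Λ = ExSet L k ∨ Λ = AllSet L k

/-- `¬Λ`: the set of sentences (logically) equivalent to the negation of a sentence in `Λ`. -/
def NegOf {L : FirstOrder.Language} (Λ : Set L.Sentence) : Set L.Sentence :=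
  {ψ | ∃ χ ∈ Λ, (∅ : L.Theory) ⊨ᵇ ψ.iff χ.not}

/-- `Th_Λ(S)`: the set of `Λ`-sentences provable from (equivalently, entailed by) `S`. -/
def ThL {L : FirstOrder.Language} (Λ : Set L.Sentence) (S : L.Theory) : Set L.Sentence :=
  {ψ ∈ Λ | S ⊨ᵇ ψ}

section Aux

universe u v

open FirstOrder.Language.BoundedFormula

variable {L : FirstOrder.Language.{u, v}} {α : Type}

/-- Semantic equivalence over nonempty structures in universe `max u v`. -/
def Equi {n : ℕ} (φ ψ : L.BoundedFormula α n) : Prop :=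
  ∀ (M : Type (max u v)) [L.Structure M] [Nonempty M] (v : α → M) (xs : Fin n → M),
    φ.Realize v xs ↔ ψ.Realize v xs

theorem Equi.trans {n : ℕ} {φ ψ θ : L.BoundedFormula α n} (h1 : Equi φ ψ) (h2 : Equi ψ θ) :
    Equi φ θ := by
  intro M _ _ v xs
  exact (h1 M v xs).trans (h2 M v xs)

theorem Equi.ex' {n : ℕ} {φ ψ : L.BoundedFormula α (n + 1)} (h : Equi φ ψ) :
    Equi φ.ex ψ.ex := by
  intro M _ _ v xs
  simp only [realize_ex]
  exact exists_congr fun a => h M v _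

theorem Equi.all' {n : ℕ} {φ ψ : L.BoundedFormula α (n + 1)} (h : Equi φ ψ) :
    Equi φ.all ψ.all := by
  intro M _ _ v xs
  simp only [realize_all]
  exact forall_congr' fun a => h M v _

theorem equi_ex_sup_r {n : ℕ} (φ : L.BoundedFormula α (n + 1)) (ψ : L.BoundedFormula α n) :
    Equi ((φ ⊔ ψ.liftAt 1 n).ex) (φ.ex ⊔ ψ) := by
  intro M _ _ v xs
  simp only [realize_ex, realize_sup, realize_liftAt_one_self, Fin.snoc_comp_castSucc]
  constructor
  · rintro ⟨a, h | h⟩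
    exacts [Or.inl ⟨a, h⟩, Or.inr h]
  · rintro (⟨a, h⟩ | h)
    exacts [⟨a, Or.inl h⟩, ⟨Classical.arbitrary M, Or.inr h⟩]

theorem equi_ex_inf_r {n : ℕ} (φ : L.BoundedFormula α (n + 1)) (ψ : L.BoundedFormula α n) :
    Equi ((φ ⊓ ψ.liftAt 1 n).ex) (φ.ex ⊓ ψ) := by
  intro M _ _ v xs
  simp only [realize_ex, realize_inf, realize_liftAt_one_self, Fin.snoc_comp_castSucc]
  constructor
  · rintro ⟨a, h1, h2⟩
    exact ⟨⟨a, h1⟩, h2⟩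
  · rintro ⟨⟨a, h1⟩, h2⟩
    exact ⟨a, h1, h2⟩

theorem equi_all_sup_r {n : ℕ} (φ : L.BoundedFormula α (n + 1)) (ψ : L.BoundedFormula α n) :
    Equi ((φ ⊔ ψ.liftAt 1 n).all) (φ.all ⊔ ψ) := by
  intro M _ _ v xs
  simp only [realize_all, realize_sup, realize_liftAt_one_self, Fin.snoc_comp_castSucc]
  constructor
  · intro h
    by_cases hq : ψ.Realize v xs
    · exact Or.inr hq
    · exact Or.inl fun a => (h a).resolve_right hq
  · rintro (h | h) a
    exacts [Or.inl (h a), Or.inr h]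

theorem equi_all_inf_r {n : ℕ} (φ : L.BoundedFormula α (n + 1)) (ψ : L.BoundedFormula α n) :
    Equi ((φ ⊓ ψ.liftAt 1 n).all) (φ.all ⊓ ψ) := by
  intro M _ _ v xs
  simp only [realize_all, realize_inf, realize_liftAt_one_self, Fin.snoc_comp_castSucc]
  constructor
  · intro h
    exact ⟨fun a => (h a).1, (h (Classical.arbitrary M)).2⟩
  · rintro ⟨h1, h2⟩ a
    exact ⟨h1 a, h2⟩

theorem equi_ex_sup_l {n : ℕ} (φ : L.BoundedFormula α n) (ψ : L.BoundedFormula α (n + 1)) :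
    Equi ((φ.liftAt 1 n ⊔ ψ).ex) (φ ⊔ ψ.ex) := by
  intro M _ _ v xs
  simp only [realize_ex, realize_sup, realize_liftAt_one_self, Fin.snoc_comp_castSucc]
  constructor
  · rintro ⟨a, h | h⟩
    exacts [Or.inl h, Or.inr ⟨a, h⟩]
  · rintro (h | ⟨a, h⟩)
    exacts [⟨Classical.arbitrary M, Or.inl h⟩, ⟨a, Or.inr h⟩]

theorem equi_ex_inf_l {n : ℕ} (φ : L.BoundedFormula α n) (ψ : L.BoundedFormula α (n + 1)) :
    Equi ((φ.liftAt 1 n ⊓ ψ).ex) (φ ⊓ ψ.ex) := by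
  intro M _ _ v xs
  simp only [realize_ex, realize_inf, realize_liftAt_one_self, Fin.snoc_comp_castSucc]
  constructor
  · rintro ⟨a, h1, h2⟩
    exact ⟨h1, a, h2⟩
  · rintro ⟨h1, a, h2⟩
    exact ⟨a, h1, h2⟩

theorem equi_all_sup_l {n : ℕ} (φ : L.BoundedFormula α n) (ψ : L.BoundedFormula α (n + 1)) :
    Equi ((φ.liftAt 1 n ⊔ ψ).all) (φ ⊔ ψ.all) := by
  intro M _ _ v xs
  simp only [realize_all, realize_sup, realize_liftAt_one_self, Fin.snoc_comp_castSucc]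
  constructor
  · intro h
    by_cases hq : φ.Realize v xs
    · exact Or.inl hq
    · exact Or.inr fun a => (h a).resolve_left hq
  · rintro (h | h) a
    exacts [Or.inl h, Or.inr (h a)]

theorem equi_all_inf_l {n : ℕ} (φ : L.BoundedFormula α n) (ψ : L.BoundedFormula α (n + 1)) :
    Equi ((φ.liftAt 1 n ⊓ ψ).all) (φ ⊓ ψ.all) := by
  intro M _ _ v xs
  simp only [realize_all, realize_inf, realize_liftAt_one_self, Fin.snoc_comp_castSucc]
  constructor
  · intro h
    exact ⟨(h (Classical.arbitrary M)).1, fun a => (h a).2⟩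
  · rintro ⟨h1, h2⟩ a
    exact ⟨h1, h2 a⟩

theorem qhier_castLE {b : Bool} {k : ℕ} :
    ∀ {m : ℕ} {φ : L.BoundedFormula α m}, QHier b k φ →
      ∀ {n : ℕ} (h : m ≤ n), QHier b k (φ.castLE h) := by
  intro m φ hφ
  induction hφ with
  | qf hq => exact fun h => .qf hq.castLE
  | ex _ ih =>
    intro n h
    exact QHier.ex (ih (Nat.add_le_add_right h 1))
  | all _ ih =>
    intro n h
    exact QHier.all (ih (Nat.add_le_add_right h 1))
  | dual _ ih => exact fun h => .dual (ih h)

theorem qhier_liftAt {b : Bool} {k : ℕ} :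
    ∀ {m : ℕ} {φ : L.BoundedFormula α m}, QHier b k φ →
      ∀ (n' p : ℕ), QHier b k (φ.liftAt n' p) := by
  intro m φ hφ
  induction hφ with
  | qf hq => exact fun n' p => .qf hq.liftAt
  | ex _ ih =>
    intro n' p
    exact QHier.ex (qhier_castLE (ih n' p) _)
  | all _ ih =>
    intro n' p
    exact QHier.all (qhier_castLE (ih n' p) _)
  | dual _ ih => exact fun n' p => .dual (ih n' p)

theorem qhier_closure (k : ℕ) : ∀ {b : Bool} {n : ℕ} {φ ψ : L.BoundedFormula α n},
    QHier b k φ → QHier b k ψ →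
    (∃ θ, QHier b k θ ∧ Equi θ (φ ⊔ ψ)) ∧ (∃ θ, QHier b k θ ∧ Equi θ (φ ⊓ ψ)) := by
  induction k using Nat.strong_induction_on with
  | _ k IH =>
  have A : ∀ {b : Bool} {k' n : ℕ} {ψ : L.BoundedFormula α n}, QHier b k' ψ → k' ≤ k →
      ∀ {φ : L.BoundedFormula α n}, φ.IsQF →
      (∃ θ, QHier b k' θ ∧ Equi θ (φ ⊔ ψ)) ∧ (∃ θ, QHier b k' θ ∧ Equi θ (φ ⊓ ψ)) := by
    intro b k' n ψ hψ
    induction hψ with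
    | @qf b0 k0 n0 ψ0 hq =>
      intro _ φ hφ
      exact ⟨⟨φ ⊔ ψ0, .qf (hφ.sup hq), fun M _ _ v xs => Iff.rfl⟩,
             ⟨φ ⊓ ψ0, .qf (hφ.inf hq), fun M _ _ v xs => Iff.rfl⟩⟩
    | @ex k0 n0 ψ' _ ih =>
      intro hk φ hφ
      obtain ⟨⟨θ1, h1, e1⟩, ⟨θ2, h2, e2⟩⟩ := ih hk hφ.liftAt
      exact ⟨⟨θ1.ex, h1.ex, e1.ex'.trans (equi_ex_sup_l φ ψ')⟩,
             ⟨θ2.ex, h2.ex, e2.ex'.trans (equi_ex_inf_l φ ψ')⟩⟩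
    | @all k0 n0 ψ' _ ih =>
      intro hk φ hφ
      obtain ⟨⟨θ1, h1, e1⟩, ⟨θ2, h2, e2⟩⟩ := ih hk hφ.liftAt
      exact ⟨⟨θ1.all, h1.all, e1.all'.trans (equi_all_sup_l φ ψ')⟩,
             ⟨θ2.all, h2.all, e2.all'.trans (equi_all_inf_l φ ψ')⟩⟩
    | @dual b0 k0 n0 ψ0 hψ0 ih =>
      intro hk φ hφ
      obtain ⟨⟨θ1, h1, e1⟩, ⟨θ2, h2, e2⟩⟩ :=
        IH k0 (lt_of_lt_of_le (Nat.lt_succ_self k0) hk) (.qf hφ) hψ0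
      exact ⟨⟨θ1, h1.dual, e1⟩, ⟨θ2, h2.dual, e2⟩⟩
  have B : ∀ {b : Bool} {k' n : ℕ} {ψ : L.BoundedFormula α n}, QHier b k' ψ →
      ∀ (k0 : ℕ), k' = k0 + 1 → k0 < k →
      ∀ {φ : L.BoundedFormula α n}, QHier (!b) k0 φ →
      (∃ θ, QHier b k' θ ∧ Equi θ (φ ⊔ ψ)) ∧ (∃ θ, QHier b k' θ ∧ Equi θ (φ ⊓ ψ)) := by
    intro b k' n ψ hψ
    induction hψ with
    | @qf b0 kx n0 ψ0 hq =>
      intro k0 hk' hk0 φ hφ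
      subst hk'
      obtain ⟨⟨θ1, h1, e1⟩, ⟨θ2, h2, e2⟩⟩ := IH k0 hk0 hφ (.qf hq)
      exact ⟨⟨θ1, h1.dual, e1⟩, ⟨θ2, h2.dual, e2⟩⟩
    | @ex kx n0 ψ' _ ih =>
      intro k0 hk' hk0 φ hφ
      obtain ⟨⟨θ1, h1, e1⟩, ⟨θ2, h2, e2⟩⟩ := ih k0 hk' hk0 (qhier_liftAt hφ 1 n0)
      exact ⟨⟨θ1.ex, h1.ex, e1.ex'.trans (equi_ex_sup_l φ ψ')⟩,
             ⟨θ2.ex, h2.ex, e2.ex'.trans (equi_ex_inf_l φ ψ')⟩⟩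
    | @all kx n0 ψ' _ ih =>
      intro k0 hk' hk0 φ hφ
      obtain ⟨⟨θ1, h1, e1⟩, ⟨θ2, h2, e2⟩⟩ := ih k0 hk' hk0 (qhier_liftAt hφ 1 n0)
      exact ⟨⟨θ1.all, h1.all, e1.all'.trans (equi_all_sup_l φ ψ')⟩,
             ⟨θ2.all, h2.all, e2.all'.trans (equi_all_inf_l φ ψ')⟩⟩
    | @dual b0 kx n0 ψ0 hψ0 ih =>
      intro k0 hk' hk0 φ hφ
      have hkx : kx = k0 := Nat.succ_injective hk'
      subst hkx
      obtain ⟨⟨θ1, h1, e1⟩, ⟨θ2, h2, e2⟩⟩ := IH kx hk0 hφ hψ0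
      exact ⟨⟨θ1, h1.dual, e1⟩, ⟨θ2, h2.dual, e2⟩⟩
  have Cgen : ∀ {b : Bool} {k' n : ℕ} {φ : L.BoundedFormula α n}, QHier b k' φ → k' ≤ k →
      ∀ {ψ : L.BoundedFormula α n}, QHier b k' ψ →
      (∃ θ, QHier b k' θ ∧ Equi θ (φ ⊔ ψ)) ∧ (∃ θ, QHier b k' θ ∧ Equi θ (φ ⊓ ψ)) := by
    intro b k' n φ hφ
    induction hφ with
    | qf hq => exact fun hk _ hψ => A hψ hk hq
    | @ex kx n0 φ' _ ih =>
      intro hk ψ hψ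
      obtain ⟨⟨θ1, h1, e1⟩, ⟨θ2, h2, e2⟩⟩ := ih hk (qhier_liftAt hψ 1 n0)
      exact ⟨⟨θ1.ex, h1.ex, e1.ex'.trans (equi_ex_sup_r φ' ψ)⟩,
             ⟨θ2.ex, h2.ex, e2.ex'.trans (equi_ex_inf_r φ' ψ)⟩⟩
    | @all kx n0 φ' _ ih =>
      intro hk ψ hψ
      obtain ⟨⟨θ1, h1, e1⟩, ⟨θ2, h2, e2⟩⟩ := ih hk (qhier_liftAt hψ 1 n0)
      exact ⟨⟨θ1.all, h1.all, e1.all'.trans (equi_all_sup_r φ' ψ)⟩,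
             ⟨θ2.all, h2.all, e2.all'.trans (equi_all_inf_r φ' ψ)⟩⟩
    | @dual b0 k0 n0 φ0 hφ0 ih =>
      intro hk ψ hψ
      exact B hψ k0 rfl (lt_of_lt_of_le (Nat.lt_succ_self k0) hk) hφ0
  intro b n φ ψ hφ hψ
  exact Cgen hφ le_rfl hψ

theorem sent_realize_eq {M : Type w} [L.Structure M] (χ : L.Sentence) (v : Empty → M)
    (xs : Fin 0 → M) : BoundedFormula.Realize χ v xs ↔ M ⊨ χ := by
  have h1 : v = default := funext fun x => x.elim
  have h2 : xs = default := funext fun x => x.elim0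
  rw [h1, h2]
  exact Iff.rfl

theorem neg_conj_aux (b : Bool) (k : ℕ) (S : Finset L.Sentence)
    (hS : ∀ ψ ∈ S, ∃ χ : L.Sentence, QHier b k χ ∧
      ∀ (M : Type (max u v)) [L.Structure M] [Nonempty M], (M ⊨ ψ ↔ ¬ M ⊨ χ)) :
    ∃ χ : L.Sentence, QHier b k χ ∧
      ∀ (M : Type (max u v)) [L.Structure M] [Nonempty M], (M ⊨ χ ↔ ∃ ψ ∈ S, ¬ M ⊨ ψ) := by
  classical
  induction S using Finset.induction_on with
  | empty =>
    refine ⟨⊥, .qf isQF_bot, ?_⟩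
    intro M _ _
    simp [Sentence.Realize, Formula.Realize]
  | @insert ψ S hψS ih =>
    obtain ⟨χψ, hqψ, hiffψ⟩ := hS ψ (Finset.mem_insert_self ψ S)
    obtain ⟨χS, hqS, hiffS⟩ := ih fun ψ' hψ' => hS ψ' (Finset.mem_insert_of_mem hψ')
    obtain ⟨θ, hθ, he⟩ := (qhier_closure k hqψ hqS).1
    refine ⟨θ, hθ, ?_⟩
    intro M _ _
    have h0 : (M ⊨ θ) ↔ (M ⊨ χψ ∨ M ⊨ χS) := by
      have h := he M default default
      rw [realize_sup, sent_realize_eq θ _ _, sent_realize_eq χψ _ _,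
        sent_realize_eq χS _ _] at h
      exact h
    rw [h0, hiffS M]
    constructor
    · rintro (h | ⟨ψ', h1, h2⟩)
      · exact ⟨ψ, Finset.mem_insert_self ψ S, fun hc => ((hiffψ M).1 hc) h⟩
      · exact ⟨ψ', Finset.mem_insert_of_mem h1, h2⟩
    · rintro ⟨ψ', h1, h2⟩
      rcases Finset.mem_insert.1 h1 with rfl | h1'
      · exact Or.inl (not_not.1 fun hc => h2 ((hiffψ M).2 hc))
      · exact Or.inr ⟨ψ', h1', h2⟩

end Aux

/-- If `A ⊬ φ ↔ ψ` for every `ψ ∈ ¬Λ` and `T⁺` is a complete consistent theory extending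
`A ∪ {φ} ∪ Th_Λ(A ∪ {¬φ})`, then `(¬Λ ∩ T⁺) ∪ A ∪ {¬φ}` is consistent. -/
theorem statement1 {L : FirstOrder.Language} (Λ : Set L.Sentence) (A : L.Theory) (φ : L.Sentence)
    (hΛ : IsLevelSet Λ) (hφ : ∀ ψ ∈ NegOf Λ, ¬ A ⊨ᵇ (φ.iff ψ))
    (Tp : L.Theory) (hTp : Tp.IsMaximal) (hsub : A ∪ {φ} ∪ ThL Λ (A ∪ {φ.not}) ⊆ Tp) :
    Theory.IsSatisfiable ((NegOf Λ ∩ Tp : Set L.Sentence) ∪ A ∪ {φ.not}) := by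
  classical
  obtain ⟨k, hΛ'⟩ := hΛ
  -- a uniform description of membership in `Λ` via `QHier`
  obtain ⟨b, hb⟩ : ∃ b : Bool, ∀ χ : L.Sentence, χ ∈ Λ ↔ QHier b k χ := by
    rcases hΛ' with h | h
    · exact ⟨true, fun χ => by rw [h]; rfl⟩
    · exact ⟨false, fun χ => by rw [h]; rfl⟩
  rw [Theory.isSatisfiable_iff_isFinitelySatisfiable]
  intro T0 hT0
  set S : Finset L.Sentence := T0.filter (fun ψ => ψ ∈ NegOf Λ ∩ Tp) with hSdef
  have hSsub : ∀ ψ ∈ S, ψ ∈ NegOf Λ ∩ Tp := fun ψ hψ => (Finset.mem_filter.1 hψ).2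
  have main : Theory.IsSatisfiable (A ∪ {φ.not} ∪ (S : L.Theory)) := by
    by_contra hcon
    -- build a single `Λ`-sentence equivalent to the disjunction of the negations of `S`
    have hSneg : ∀ ψ ∈ S, ∃ χ : L.Sentence, QHier b k χ ∧
        ∀ (M : Type _) [L.Structure M] [Nonempty M], (M ⊨ ψ ↔ ¬ M ⊨ χ) := by
      intro ψ hψ
      obtain ⟨χ, hχΛ, hiff⟩ := (hSsub ψ hψ).1
      refine ⟨χ, (hb χ).1 hχΛ, ?_⟩
      intro M _ _
      haveI : M ⊨ (∅ : L.Theory) := ⟨fun _ h => absurd h (Set.notMem_empty _)⟩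
      have h := hiff (Theory.ModelType.of ∅ M) default default
      rw [BoundedFormula.realize_iff, BoundedFormula.realize_not] at h
      have h1 := sent_realize_eq (M := M) ψ default default
      have h2 := sent_realize_eq (M := M) χ default default
      rw [← h1, ← h2]
      exact h
    obtain ⟨χ, hχq, hχ⟩ := neg_conj_aux b k S hSneg
    have hχΛ : χ ∈ Λ := (hb χ).2 hχq
    have hχTh : χ ∈ ThL Λ (A ∪ {φ.not}) := by
      refine ⟨hχΛ, ?_⟩
      intro M v xs
      have hM : ∃ ψ ∈ S, ¬ ((M : Type _) ⊨ ψ) := by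
        by_contra hall
        push_neg at hall
        apply hcon
        haveI : (M : Type _) ⊨ A ∪ {φ.not} ∪ (S : L.Theory) := by
          rw [Theory.model_iff]
          intro σ hσ
          rcases hσ with hσ | hσ
          · exact Theory.realize_sentence_of_mem (A ∪ {φ.not}) hσ
          · exact hall σ hσ
        exact Theory.Model.isSatisfiable (M : Type _)
      rw [sent_realize_eq χ v xs]
      exact (hχ (M : Type _)).2 hM
    have hχTp : χ ∈ Tp := hsub (Or.inr hχTh)
    obtain ⟨M⟩ := hTp.1
    have h1 : (M : Type _) ⊨ χ := Theory.realize_sentence_of_mem Tp hχTp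
    obtain ⟨ψ, hψS, hψn⟩ := (hχ (M : Type _)).1 h1
    exact hψn (Theory.realize_sentence_of_mem Tp (hSsub ψ hψS).2)
  refine main.mono ?_
  intro x hx
  rcases hT0 hx with (h | h) | h
  · exact Or.inr (Finset.mem_coe.2 (Finset.mem_filter.2 ⟨hx, h⟩))
  · exact Or.inl (Or.inl h)
  · exact Or.inl (Or.inr h)
end

section
/- Let Λ be a level-sentence set and let T be a consistent theory that is not Λ-axiomatizable, i.e., the Λ-consequences of T do not imply all of T. Then there exist complete consistent theories T₀ and T₁ such that T ⊆ T₀, T₁ is inconsistent with T, and Λ ∩ T₀ ⊆ Λ ∩ T₁. -/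
open FirstOrder FirstOrder.Language

/-!
Choose `φ ∈ T` with `Th_Λ(T) ⊭ φ` and a model `M` of `Th_Λ(T) ∪ {¬φ}`; then `T₁ = Th(M)` is
inconsistent with `T`. Up to equivalence, `Λ` is closed under finite disjunctions (quantifiers
can be pulled out of a disjunction one at a time). Hence `T ∪ {¬χ | χ ∈ Λ, M ⊭ χ}` is finitely
satisfiable: if a finite part were not, `T` would prove the disjunction of the `χ`'s involved, a
`Λ`-sentence, which would then hold in `M`. By compactness it has a model `N`, and `T₀ = Th(N)`
satisfies `Λ ∩ T₀ ⊆ T₁`.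
-/

namespace FirstOrder.Language.BoundedFormula

variable {L : FirstOrder.Language} {T : L.Theory} {α : Type*} {n : ℕ}

theorem liftAt_one_all (φ : L.BoundedFormula α (n + 1)) (m : ℕ) :
    φ.all.liftAt 1 m = (φ.liftAt 1 m).all := by
  simp [liftAt, mapTermRel]

theorem liftAt_one_ex (φ : L.BoundedFormula α (n + 1)) (m : ℕ) :
    φ.ex.liftAt 1 m = (φ.liftAt 1 m).ex :=
  congrArg BoundedFormula.not (liftAt_one_all φ.not m)

theorem sup_comm_iff (φ ψ : L.BoundedFormula α n) : φ ⊔ ψ ⇔[T] ψ ⊔ φ :=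
  fun M v xs => by simp [or_comm]

theorem ex_sup_liftAt_iff (φ : L.BoundedFormula α (n + 1)) (ψ : L.BoundedFormula α n) :
    (φ ⊔ ψ.liftAt 1 n).ex ⇔[T] φ.ex ⊔ ψ :=
  fun M v xs => by simp [exists_or]

theorem all_sup_liftAt_iff (φ : L.BoundedFormula α (n + 1)) (ψ : L.BoundedFormula α n) :
    (φ ⊔ ψ.liftAt 1 n).all ⇔[T] φ.all ⊔ ψ :=
  fun M v xs => by simp [forall_or_right]

theorem realize_iff_exists_of_iff_iSup {M : Type*} [L.Structure M] [Nonempty M]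
    {θ : L.Sentence} {s : Finset L.Sentence}
    (hθ : θ ⇔[∅] BoundedFormula.iSup (fun φ : s => φ.1)) :
    M ⊨ θ ↔ ∃ φ ∈ s, M ⊨ φ := by
  rw [hθ.models_sentence_iff]
  simp [Sentence.Realize, Formula.Realize]

end FirstOrder.Language.BoundedFormula

namespace QHier

variable {L : FirstOrder.Language} {α : Type}

theorem liftAt {b k n m} {φ : L.BoundedFormula α n} (h : QHier b k φ) :
    QHier b k (φ.liftAt 1 m) := by
  induction h with
  | qf h => exact qf h.liftAt
  | ex _ ih => rw [BoundedFormula.liftAt_one_ex]; exact ex ih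
  | all _ ih => rw [BoundedFormula.liftAt_one_all]; exact all ih
  | dual _ ih => exact dual ih

theorem isQF_of_zero {b n} {φ : L.BoundedFormula α n} (h : QHier b 0 φ) : φ.IsQF := by
  cases h with
  | qf h => exact h

def IsClosedUnderSup (T : L.Theory) (α : Type) (b : Bool) (k : ℕ) : Prop :=
  ∀ {n} {φ ψ : L.BoundedFormula α n}, QHier b k φ → QHier b k ψ →
    ∃ θ, QHier b k θ ∧ θ ⇔[T] φ ⊔ ψ

variable {T : L.Theory}

theorem exists_iff_sup_of_dual {k : ℕ} (ih : ∀ b, IsClosedUnderSup T α b k)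
    {b n} {φ ψ : L.BoundedFormula α n} (hφ : QHier b (k + 1) φ) (hψ : QHier (!b) k ψ) :
    ∃ θ, QHier b (k + 1) θ ∧ θ ⇔[T] φ ⊔ ψ := by
  generalize hm : k + 1 = m at hφ
  induction hφ with
  | qf hφ =>
    subst hm
    obtain ⟨θ, hθ, h⟩ := ih _ (qf hφ) hψ
    exact ⟨θ, hθ.dual, h⟩
  | ex _ ih' =>
    obtain ⟨θ, hθ, h⟩ := ih' hψ.liftAt hm
    exact ⟨θ.ex, hθ.ex, h.ex.trans (BoundedFormula.ex_sup_liftAt_iff _ _)⟩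
  | all _ ih' =>
    obtain ⟨θ, hθ, h⟩ := ih' hψ.liftAt hm
    exact ⟨θ.all, hθ.all, h.all.trans (BoundedFormula.all_sup_liftAt_iff _ _)⟩
  | dual hφ =>
    obtain rfl : k = _ := Nat.succ_injective hm
    obtain ⟨θ, hθ, h⟩ := ih _ hφ hψ
    exact ⟨θ, hθ.dual, h⟩

theorem isClosedUnderSup_succ {k : ℕ} (ih : ∀ b, IsClosedUnderSup T α b k) (b : Bool) :
    IsClosedUnderSup T α b (k + 1) := by
  intro n φ ψ hφ hψ
  generalize hm : k + 1 = m at hφ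
  induction hφ with
  | qf hφ =>
    subst hm
    obtain ⟨θ, hθ, h⟩ := exists_iff_sup_of_dual ih hψ (qf hφ)
    exact ⟨θ, hθ, h.trans (BoundedFormula.sup_comm_iff _ _)⟩
  | ex _ ih' =>
    obtain rfl : k = _ := Nat.succ_injective hm
    obtain ⟨θ, hθ, h⟩ := ih' hψ.liftAt rfl
    exact ⟨θ.ex, hθ.ex, h.ex.trans (BoundedFormula.ex_sup_liftAt_iff _ _)⟩
  | all _ ih' =>
    obtain rfl : k = _ := Nat.succ_injective hm
    obtain ⟨θ, hθ, h⟩ := ih' hψ.liftAt rfl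
    exact ⟨θ.all, hθ.all, h.all.trans (BoundedFormula.all_sup_liftAt_iff _ _)⟩
  | dual hφ =>
    obtain rfl : k = _ := Nat.succ_injective hm
    obtain ⟨θ, hθ, h⟩ := exists_iff_sup_of_dual ih hψ hφ
    exact ⟨θ, hθ, h.trans (BoundedFormula.sup_comm_iff _ _)⟩

theorem isClosedUnderSup (b : Bool) (k : ℕ) : IsClosedUnderSup T α b k := by
  induction k generalizing b with
  | zero =>
    intro n φ ψ hφ hψ
    exact ⟨φ ⊔ ψ, qf (hφ.isQF_of_zero.sup hψ.isQF_of_zero), .refl _⟩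
  | succ k ih => exact isClosedUnderSup_succ ih b

theorem exists_iff_iSup {n : ℕ} {b : Bool} {k : ℕ} (s : Finset (L.BoundedFormula α n))
    (hs : ∀ φ ∈ s, QHier b k φ) :
    ∃ θ, QHier b k θ ∧ θ ⇔[T] BoundedFormula.iSup (fun φ : s => φ.1) := by
  classical
  induction s using Finset.induction_on with
  | empty => exact ⟨⊥, qf BoundedFormula.isQF_bot, fun M v xs => by simp⟩
  | insert φ s _ ih =>
    obtain ⟨θ, hθ, h⟩ := ih fun ψ hψ => hs ψ (Finset.mem_insert_of_mem hψ)
    obtain ⟨θ', hθ', h'⟩ := isClosedUnderSup b k (hs φ (Finset.mem_insert_self φ s)) hθ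
    refine ⟨θ', hθ', fun M v xs => ?_⟩
    have h₁ := h M v xs
    have h₂ := h' M v xs
    simp only [BoundedFormula.realize_iff, BoundedFormula.realize_sup,
      BoundedFormula.realize_iSup] at h₁ h₂ ⊢
    simp [h₂, h₁]

end QHier

section Compactness

universe u v

variable {L : FirstOrder.Language.{u, v}} {T : L.Theory} {Λ : Set L.Sentence}

def IsClosedUnderFiniteSup (Λ : Set L.Sentence) : Prop :=
  ∀ s : Finset L.Sentence, ↑s ⊆ Λ → ∃ θ ∈ Λ, θ ⇔[∅] BoundedFormula.iSup (fun φ : s => φ.1)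

theorem IsLevelSet.isClosedUnderFiniteSup (hΛ : IsLevelSet Λ) :
    IsClosedUnderFiniteSup Λ := by
  intro s hs
  obtain ⟨k, rfl | rfl⟩ := hΛ <;> exact QHier.exists_iff_iSup s hs

variable {M : Type*} [L.Structure M] [Nonempty M]

theorem isSatisfiable_union_not_image_finset (hΛ : IsClosedUnderFiniteSup Λ)
    (hM : M ⊨ ThL Λ T) (s : Finset L.Sentence) (hs : ↑s ⊆ Λ \ L.completeTheory M) :
    (T ∪ Formula.not '' ↑s).IsSatisfiable := by
  obtain ⟨θ, hθΛ, hθ⟩ := hΛ s fun φ hφ => (hs hφ).1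
  have hTθ : ¬ T ⊨ᵇ θ := by
    intro hTθ
    obtain ⟨φ, hφ, hMφ⟩ :=
      (BoundedFormula.realize_iff_exists_of_iff_iSup hθ).1 (hM.realize_of_mem θ ⟨hθΛ, hTθ⟩)
    exact (hs hφ).2 hMφ
  rw [Theory.models_iff_not_satisfiable, not_not] at hTθ
  obtain ⟨N⟩ := hTθ
  have hNθ : ¬ N ⊨ θ :=
    (Sentence.realize_not N).1 (N.is_model.realize_of_mem _ (Set.mem_union_right _ rfl))
  have : (N : Type _) ⊨ T ∪ Formula.not '' ↑s := by
    refine Theory.model_union_iff.2 ⟨N.is_model.mono Set.subset_union_left, ?_⟩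
    refine (Theory.model_iff _).2 ?_
    rintro _ ⟨φ, hφ, rfl⟩
    exact (Sentence.realize_not N).2 fun hNφ =>
      hNθ ((BoundedFormula.realize_iff_exists_of_iff_iSup hθ).2 ⟨φ, hφ, hNφ⟩)
  exact Theory.Model.isSatisfiable N

theorem isSatisfiable_union_not_image (hΛ : IsClosedUnderFiniteSup Λ) (hM : M ⊨ ThL Λ T) :
    (T ∪ Formula.not '' (Λ \ L.completeTheory M)).IsSatisfiable := by
  classical
  refine Theory.isSatisfiable_iff_isFinitelySatisfiable.2 fun t ht => ?_
  obtain ⟨t₁, t₂, rfl, ht₁, ht₂⟩ := Finset.subset_union_elim ht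
  obtain ⟨s, hs, rfl⟩ := Finset.subset_set_image_iff.1 (ht₂.trans Set.sdiff_subset)
  refine (isSatisfiable_union_not_image_finset hΛ hM s hs).mono ?_
  rw [Finset.coe_union, Finset.coe_image]
  exact Set.union_subset_union ht₁ subset_rfl

theorem exists_model_inter_completeTheory_subset (hΛ : IsClosedUnderFiniteSup Λ)
    (hM : M ⊨ ThL Λ T) :
    ∃ N : Theory.ModelType.{u, v, max u v} T, Λ ∩ L.completeTheory N ⊆ L.completeTheory M := by
  obtain ⟨N⟩ := isSatisfiable_union_not_image hΛ hM
  refine ⟨N.subtheoryModel Set.subset_union_left, fun φ ⟨hφΛ, hNφ⟩ => ?_⟩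
  by_contra hMφ
  have hNnot : (N : Type _) ⊨ φ.not :=
    N.is_model.realize_of_mem _ (Set.mem_union_right _ ⟨φ, ⟨hφΛ, hMφ⟩, rfl⟩)
  exact (Sentence.realize_not N).1 hNnot hNφ

end Compactness

theorem statement4_general {L : FirstOrder.Language} (Λ : Set L.Sentence) (T : L.Theory)
    (hΛ : IsLevelSet Λ)
    (hax : ¬ ∀ φ ∈ T, ThL Λ T ⊨ᵇ φ) :
    ∃ T₀ T₁ : L.Theory, T₀.IsMaximal ∧ T₁.IsMaximal ∧
      T ⊆ T₀ ∧ ¬ (T₁ ∪ T).IsSatisfiable ∧ Λ ∩ T₀ ⊆ Λ ∩ T₁ := by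
  obtain ⟨φ, hφT, hφ⟩ := not_forall₂.1 hax
  rw [Theory.models_iff_not_satisfiable, not_not] at hφ
  obtain ⟨M⟩ := hφ
  have hMφ : ¬ M ⊨ φ :=
    (Sentence.realize_not M).1 (M.is_model.realize_of_mem _ (Set.mem_union_right _ rfl))
  obtain ⟨N, hNM⟩ := exists_model_inter_completeTheory_subset hΛ.isClosedUnderFiniteSup
    (M.is_model.mono Set.subset_union_left)
  refine ⟨L.completeTheory N, L.completeTheory M, completeTheory.isMaximal L N,
    completeTheory.isMaximal L M, Theory.completeTheory.subset, ?_,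
    fun ψ hψ => ⟨hψ.1, hNM hψ⟩⟩
  rintro ⟨K⟩
  have : (K : Type _) ⊨ L.completeTheory M := K.is_model.mono Set.subset_union_left
  exact (realize_iff_of_model_completeTheory M K φ).not.2 hMφ
    (K.is_model.realize_of_mem φ (Set.mem_union_right _ hφT))

/-- If a consistent theory `T` is not `Λ`-axiomatizable, then there are complete consistent
theories `T₀ ⊇ T` and `T₁` inconsistent with `T` such that `Λ ∩ T₀ ⊆ Λ ∩ T₁`. -/
theorem statement4 {L : FirstOrder.Language} (Λ : Set L.Sentence) (T : L.Theory)
    (hΛ : IsLevelSet Λ) (hTcon : T.IsSatisfiable)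
    (hax : ¬ ∀ φ ∈ T, ThL Λ T ⊨ᵇ φ) :
    ∃ T₀ T₁ : L.Theory, T₀.IsMaximal ∧ T₁.IsMaximal ∧
      T ⊆ T₀ ∧ ¬ (T₁ ∪ T).IsSatisfiable ∧ Λ ∩ T₀ ⊆ Λ ∩ T₁ :=
  statement4_general Λ T hΛ hax
end
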